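/- Let I be a graded ideal of R with I_e ≠ R_e, where e is the identity of G. Suppose that the subring R_e is not a local ring and that for each a ∈ I_e the ideal (φ(I) :_{R_e} a) = {r ∈ R_e : ra ∈ φ(I)} is not a maximal ideal of R_e. Then I is an e-φ-prime ideal of R if and only if I is an e-φ-1-absorbing prime ideal of R. -/

import Mathlib

/-- The underlying set of an element of `GI(R) ∪ {∅}`: `none` plays the role of `∅`. -/
def phiSet {ι R : Type*} [AddGroup ι] [DecidableEq ι] [CommRing R]
    (𝒜 : ι → AddSubgroup R) [GradedRing 𝒜]
    (o : Option (HomogeneousIdeal 𝒜)) : Set R :=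
  {x | ∃ J ∈ o, x ∈ J}

/-- `I_g = I ∩ R_g`, the `g`-th graded piece of the graded ideal `I`. -/
def piece {ι R : Type*} [AddGroup ι] [DecidableEq ι] [CommRing R]
    (𝒜 : ι → AddSubgroup R) [GradedRing 𝒜]
    (I : HomogeneousIdeal 𝒜) (g : ι) : Set R :=
  (I.toIdeal : Set R) ∩ (𝒜 g)

/-!
Suppose `ab ∈ I \ φ(I)` with `a, b ∈ R_e \ I`. For a nonunit `c ∈ R_e` with `c(ab) ∉ φ(I)`, the
1-absorbing property applied to `(ca)b` and `(cb)a` gives `ca, cb ∈ I`. So every nonunit of `R_e`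
lies in `(φ(I) :_{R_e} ab)` or in the proper ideal `N = (I :_{R_e} a) ∩ (I :_{R_e} b)`. If
`φ(I) = ∅` the first set is empty; otherwise it is a proper, non-maximal ideal, and prime avoidance
for a maximal ideal containing it forces it into `N`. Either way `N` contains all nonunits of
`R_e`, so `R_e` would be local. The 1-absorbing property applies to nonunits of `R_e` because
they are nonunits of `R`: projecting `cu⁻¹ = 1` to degree `e` inverts `c` inside `R_e`.
-/

theorem IsLocalRing.of_nonunits_subset {S : Type*} [Semiring S] {N : Ideal S} (hN : N ≠ ⊤)
    (h : nonunits S ⊆ N) : IsLocalRing S :=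
  have : Nontrivial S := nontrivial_of_ne 0 1 fun h01 ↦ hN (N.eq_top_iff_one.2 (h01 ▸ N.zero_mem))
  .of_nonunits_add fun _ _ hx hy hxy ↦ hN (N.eq_top_of_isUnit_mem (N.add_mem (h hx) (h hy)) hxy)

theorem Ideal.nonunits_subset_of_subset_union {S : Type*} [Ring S] {D N : Ideal S}
    (hD : D ≠ ⊤) (hDmax : ¬D.IsMaximal) (h : nonunits S ⊆ D ∪ N) : nonunits S ⊆ N := by
  obtain ⟨M, hM, hDM⟩ := D.exists_le_maximal hD
  have hMN : M ≤ N := by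
    rcases Ideal.subset_union.mp ((coe_subset_nonunits hM.ne_top).trans h) with hMD | hMN
    · exact absurd (le_antisymm hDM hMD ▸ hM) hDmax
    · exact hMN
  exact fun x hx ↦ (h hx).elim (fun hxD ↦ hMN (hDM hxD)) id

theorem GradedRing.isLocalHom_algebraMap_zero {ι R σ : Type*} [AddMonoid ι] [DecidableEq ι]
    [CommSemiring R] [SetLike σ R] [AddSubmonoidClass σ R] (𝒜 : ι → σ) [GradedRing 𝒜] :
    IsLocalHom (algebraMap (𝒜 0) R) where
  map_nonunit c := by
    rintro ⟨u, hu⟩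
    refine .of_mul_eq_one (DirectSum.decompose 𝒜 (↑u⁻¹ : R) 0) (Subtype.ext ?_)
    have hcu : (c : R) * ↑u⁻¹ = 1 := by rw [show (c : R) = u from hu.symm, u.mul_inv]
    have := DirectSum.coe_decompose_mul_of_left_mem_zero 𝒜 (j := 0) (b := (↑u⁻¹ : R)) c.2
    rw [hcu, DirectSum.decompose_of_mem_same 𝒜 (SetLike.one_mem_graded 𝒜)] at this
    exact this.symm

theorem nonunits_subset_union_comap_colon_inf_colon {S R : Type*} [Semiring S] [CommSemiring R]
    (f : S →+* R) [IsLocalHom f] {I : Ideal R} {P : Set R}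
    (habs : ∀ x y z : S, ¬IsUnit (f x) → ¬IsUnit (f y) → ¬IsUnit (f z) →
      f x * f y * f z ∈ I → f x * f y * f z ∉ P → f x * f y ∈ I ∨ f z ∈ I)
    {a b : S} (hab : f a * f b ∈ I) (ha : f a ∉ I) (hb : f b ∉ I) :
    nonunits S ⊆ {c | f c * (f a * f b) ∈ P} ∪ (I.colon {f a} ⊓ I.colon {f b}).comap f := by
  intro c hc
  by_cases hcP : f c * (f a * f b) ∈ P
  · exact Or.inl hcP
  have hfa : ¬IsUnit (f a) := fun hu ↦ hb ((I.unit_mul_mem_iff_mem hu).mp hab)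
  have hfb : ¬IsUnit (f b) := fun hu ↦ ha ((I.mul_unit_mem_iff_mem hu).mp hab)
  have hfc : ¬IsUnit (f c) := mt (IsUnit.of_map f c) hc
  have hba : f b * f a ∈ I := mul_comm (f a) (f b) ▸ hab
  have hca : f c * f a ∈ I := by
    refine (habs c a b hfc hfa hfb ?_ ?_).resolve_right hb
    · rw [mul_assoc]; exact I.mul_mem_left _ hab
    · rwa [mul_assoc]
  have hcb : f c * f b ∈ I := by
    refine (habs c b a hfc hfb hfa ?_ ?_).resolve_right ha
    · rw [mul_assoc]; exact I.mul_mem_left _ hba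
    · rwa [mul_assoc, mul_comm (f b)]
  exact Or.inr ⟨by simpa using hca, by simpa using hcb⟩

theorem stmt11_general {ι R : Type*} [AddGroup ι] [DecidableEq ι] [CommRing R]
    (𝒜 : ι → AddSubgroup R) [GradedRing 𝒜]
    (φ : HomogeneousIdeal 𝒜 → Option (HomogeneousIdeal 𝒜))
    (I : HomogeneousIdeal 𝒜)
    (hnotlocal : ¬ IsLocalRing (𝒜 (0 : ι)))
    (hnotmax : ∀ a ∈ piece 𝒜 I (0 : ι),
      ¬ ∃ M : Ideal (𝒜 (0 : ι)), M.IsMaximal ∧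
        (M : Set (𝒜 (0 : ι))) = {r : 𝒜 (0 : ι) | (r : R) * a ∈ phiSet 𝒜 (φ I)}) :
    (∀ a b : R, a ∈ 𝒜 (0 : ι) → b ∈ 𝒜 (0 : ι) →
        a * b ∈ I.toIdeal → a * b ∉ phiSet 𝒜 (φ I) → a ∈ I.toIdeal ∨ b ∈ I.toIdeal) ↔
      (∀ a b c : R, a ∈ 𝒜 (0 : ι) → b ∈ 𝒜 (0 : ι) → c ∈ 𝒜 (0 : ι) →
        ¬IsUnit a → ¬IsUnit b → ¬IsUnit c →
        a * b * c ∈ I.toIdeal → a * b * c ∉ phiSet 𝒜 (φ I) →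
        a * b ∈ I.toIdeal ∨ c ∈ I.toIdeal) := by
  have mul_mem_zero {x y : R} (hx : x ∈ 𝒜 0) (hy : y ∈ 𝒜 0) : x * y ∈ 𝒜 0 :=
    zero_add (0 : ι) ▸ SetLike.mul_mem_graded hx hy
  refine ⟨fun hprime a b c ha hb hc _ _ _ ↦ hprime (a * b) c (mul_mem_zero ha hb) hc,
    fun habs a b ha hb hab habP ↦ ?_⟩
  by_contra! hnot
  have := GradedRing.isLocalHom_algebraMap_zero 𝒜
  let N := (I.toIdeal.colon {a} ⊓ I.toIdeal.colon {b}).comap (algebraMap (𝒜 0) R)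
  have hcover : nonunits (𝒜 0) ⊆ {c : 𝒜 0 | (c : R) * (a * b) ∈ phiSet 𝒜 (φ I)} ∪ N :=
    nonunits_subset_union_comap_colon_inf_colon (algebraMap (𝒜 0) R)
      (fun x y z : 𝒜 0 ↦ habs x y z x.2 y.2 z.2) (a := ⟨a, ha⟩) (b := ⟨b, hb⟩) hab hnot.1 hnot.2
  have hN : N ≠ ⊤ := fun h ↦ hnot.1 (by simpa using (N.eq_top_iff_one.1 h).1)
  refine hnotlocal (IsLocalRing.of_nonunits_subset hN ?_)
  rcases hφI : φ I with _ | J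
  · simpa [hφI, phiSet] using hcover
  let D := (J.toIdeal.colon {a * b}).comap (algebraMap (𝒜 0) R)
  have hDset : {c : 𝒜 0 | (c : R) * (a * b) ∈ phiSet 𝒜 (φ I)} = D := by
    ext; simp [D, phiSet, hφI]
  have hD : D ≠ ⊤ := fun h ↦ habP (by simpa [D, phiSet, hφI] using D.eq_top_iff_one.1 h)
  have hDmax : ¬D.IsMaximal := fun h ↦
    hnotmax (a * b) ⟨hab, mul_mem_zero ha hb⟩ ⟨D, h, hDset.symm⟩
  exact Ideal.nonunits_subset_of_subset_union hD hDmax (hDset ▸ hcover)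

/-- Let `I` be a graded ideal of `R` with `I_e ≠ R_e`. Suppose the subring `R_e` is not a
local ring and that for each `a ∈ I_e` the set `(φ(I) :_{R_e} a)` is not a maximal ideal
of `R_e`. Then `I` is an `e`-`φ`-prime ideal of `R` if and only if `I` is an
`e`-`φ`-1-absorbing prime ideal of `R`. -/
theorem stmt11 {ι R : Type*} [AddGroup ι] [DecidableEq ι] [CommRing R] [Nontrivial R]
    (𝒜 : ι → AddSubgroup R) [GradedRing 𝒜]
    (φ : HomogeneousIdeal 𝒜 → Option (HomogeneousIdeal 𝒜))
    (hφ : ∀ J : HomogeneousIdeal 𝒜, phiSet 𝒜 (φ J) ⊆ (J.toIdeal : Set R))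
    (I : HomogeneousIdeal 𝒜) (hproper : piece 𝒜 I (0 : ι) ≠ ((𝒜 0 : AddSubgroup R) : Set R))
    (hnotlocal : ¬ IsLocalRing (𝒜 (0 : ι)))
    (hnotmax : ∀ a ∈ piece 𝒜 I (0 : ι),
      ¬ ∃ M : Ideal (𝒜 (0 : ι)), M.IsMaximal ∧
        (M : Set (𝒜 (0 : ι))) = {r : 𝒜 (0 : ι) | (r : R) * a ∈ phiSet 𝒜 (φ I)}) :
    (∀ a b : R, a ∈ 𝒜 (0 : ι) → b ∈ 𝒜 (0 : ι) →
        a * b ∈ I.toIdeal → a * b ∉ phiSet 𝒜 (φ I) → a ∈ I.toIdeal ∨ b ∈ I.toIdeal) ↔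
      (∀ a b c : R, a ∈ 𝒜 (0 : ι) → b ∈ 𝒜 (0 : ι) → c ∈ 𝒜 (0 : ι) →
        ¬IsUnit a → ¬IsUnit b → ¬IsUnit c →
        a * b * c ∈ I.toIdeal → a * b * c ∉ phiSet 𝒜 (φ I) →
        a * b ∈ I.toIdeal ∨ c ∈ I.toIdeal) :=
  stmt11_general 𝒜 φ I hnotlocal hnotmax
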